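/- Let G be a discrete group, N ⊴ G, and A a G-graded *-algebra. Since the dual action δ̂ of G on A⋊G restricts to N and extends to all of G, the map on generators (a_s, t, r) ↦ (a_s, t r⁻¹, r) is an isomorphism from the bimodule V(A⋊G) for the induced action (generators (a_s, t, r), with the induced-action bimodule formulas) onto Green's bimodule X_N^G(A⋊G) (generators (a_s, t, r) with Green's formulas for the action δ̂ of G on A⋊G and subgroup N): it intertwines the left actions through the isomorphism ([s, (a_t, v)], u) ↦ (a_t, v s⁻¹, u, u⁻¹ s N) of Ind(A⋊G)⋊G onto A⋊G⋊G⋊(G/N), and preserves the right (A⋊G)⋊N-valued inner products, on all generators. -/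
import Mathlib


/-!
Statement 15 (from Section 5 of Kaliszewski–Quigg): for a discrete group `G`,
`N ⊴ G`, and a `G`-graded *-algebra `A`, the dual action `δ̂` of `G` on `A ⋊ G`
restricts to `N` and extends to `G`, and the map on generators
`(a_s, t, r) ↦ (a_s, t r⁻¹, r)` is an isomorphism of the bimodule `V(A ⋊ G)` for
the induced action (an `Ind(A ⋊ G) ⋊ G` – `(A ⋊ G) ⋊ N` bimodule) onto Green's
bimodule `X_N^G(A ⋊ G)`: it intertwines the left actions through the
isomorphism `([g, (a_t, v)], u) ↦ (a_t, v g⁻¹, u, u⁻¹ g N)` of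
`Ind(A ⋊ G) ⋊ G` onto `A ⋊ G ⋊ G ⋊ (G/N)`, and it preserves the right
`(A ⋊ G) ⋊ N`-valued inner products, on all generators.

`V(A ⋊ G)` and `X_N^G(A ⋊ G)` are both spanned by the generators
`((a_w, v), r)`, modelled in `(G × G × G) →₀ A`.  The bimodule `V(B)` for an
`N`-action `β` on `B` has operations
`([g,b],u)·(c,r) = (β_{r⁻¹ u⁻¹ g}(b) c, u r)` if `r⁻¹ u⁻¹ g ∈ N` (else `0`) and
`⟨(b,s),(c,t)⟩ = (b* β_{s⁻¹ t}(c), s⁻¹ t)` if `s⁻¹ t ∈ N` (else `0`), here with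
`B = A ⋊ G` and `β = δ̂|_N`.
-/

attribute [local instance] Classical.propDecidable

noncomputable section

variable {G : Type*} [Group G] {A : Type*} [Ring A] [Algebra ℂ A] [StarRing A]
  [StarModule ℂ A] {N : Subgroup G} [N.Normal]

/-- `A` is a `G`-graded *-algebra with grading subspaces `𝒜 s`. -/
structure IsStarGrading (𝒜 : G → Submodule ℂ A) : Prop where
  one_mem : (1 : A) ∈ 𝒜 1
  mul_mem : ∀ ⦃s t : G⦄ ⦃a b : A⦄, a ∈ 𝒜 s → b ∈ 𝒜 t → a * b ∈ 𝒜 (s * t)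
  star_mem : ∀ ⦃s : G⦄ ⦃a : A⦄, a ∈ 𝒜 s → star a ∈ 𝒜 s⁻¹
  indep : iSupIndep 𝒜
  span_top : ⨆ s, 𝒜 s = ⊤

/-- Left action of the generator `([g, (a, w, v)], u)` of `Ind(A ⋊ G) ⋊ G` on
the generator `((c, w', v'), r)` of `V(A ⋊ G)` (for `β = δ̂|_N`):
`= ((a c, v'), u r)` if `r⁻¹ u⁻¹ g ∈ N` and `v (r⁻¹ u⁻¹ g)⁻¹ = w' v'`,
else `0`. -/
def vAct (g : G) (a : A) (w v u : G) (c : A) (w' v' r : G) : (G × G × G) →₀ A :=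
  if (r⁻¹ * u⁻¹ * g ∈ N) ∧ v * (r⁻¹ * u⁻¹ * g)⁻¹ = w' * v' then
    Finsupp.single (w * w', v', u * r) (a * c)
  else 0

/-- The `(A ⋊ G) ⋊ N`-valued right inner product on `V(A ⋊ G)`:
`⟨((a,w,v),s),((c,w',v'),t)⟩ = ((a,w,v)* δ̂_{s⁻¹ t}(c,w',v'), s⁻¹ t)` if
`s⁻¹ t ∈ N` (else `0`), i.e. `((star a · c, w⁻¹ w', v' t⁻¹ s), s⁻¹ t)` when
moreover `w v = w' v' t⁻¹ s` (else `0`). -/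
def vInner (a : A) (w v s : G) (c : A) (w' v' t : G) : (G × G × N) →₀ A :=
  if h : (s⁻¹ * t ∈ N) ∧ w * v = w' * (v' * t⁻¹ * s) then
    Finsupp.single (w⁻¹ * w', v' * t⁻¹ * s, ⟨s⁻¹ * t, h.1⟩) (star a * c)
  else 0

/-- Left action of the generator `(a, r, s, t, uN)` of `A ⋊ G ⋊ G ⋊ (G/N)` on
the generator `((b, r', s'), t')` of Green's bimodule `X_N^G(A ⋊ G)`:
`= ((a b, s' t⁻¹), t t')` if `s = r' s' t⁻¹` and `uN = t'N`, else `0`. -/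
def c4ActX (a : A) (r s t : G) (u : G ⧸ N) (b : A) (r' s' t' : G) :
    (G × G × G) →₀ A :=
  if s = r' * s' * t⁻¹ ∧ u = (t' : G ⧸ N) then
    Finsupp.single (r * r', s' * t⁻¹, t * t') (a * b)
  else 0

/-- The `(A ⋊ G) ⋊ N`-valued right inner product on Green's bimodule
`X_N^G(A ⋊ G)`: `⟨((a,r,s),t),((b,r',s'),t')⟩ = ((star a · b, s' t), t⁻¹ t')`
if `r s = r' s'` and `tN = t'N`, else `0`. -/
def xInner (a : A) (r s t : G) (b : A) (r' s' t' : G) : (G × G × N) →₀ A :=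
  if h : r * s = r' * s' ∧ (t : G ⧸ N) = (t' : G ⧸ N) then
    Finsupp.single (r⁻¹ * r', s' * t, ⟨t⁻¹ * t', QuotientGroup.eq.mp h.2⟩)
      (star a * b)
  else 0

/-- The map `(a_s, t, r) ↦ (a_s, t r⁻¹, r)`, extended linearly. -/
def PsiV (f : (G × G × G) →₀ A) : (G × G × G) →₀ A :=
  f.sum fun p x => Finsupp.single (p.1, p.2.1 * p.2.2⁻¹, p.2.2) x

/-- The underlying bijection of `PsiV` on indices. -/
def psiEquiv (G : Type*) [Group G] : G × G × G ≃ G × G × G where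
  toFun p := (p.1, p.2.1 * p.2.2⁻¹, p.2.2)
  invFun p := (p.1, p.2.1 * p.2.2, p.2.2)
  left_inv p := by simp
  right_inv p := by simp

lemma psiV_eq_mapDomain (f : (G × G × G) →₀ A) :
    PsiV f = Finsupp.mapDomain (psiEquiv G) f := rfl

lemma psiV_single (p : G × G × G) (a : A) :
    PsiV (Finsupp.single p a) = Finsupp.single (psiEquiv G p) a := by
  rw [psiV_eq_mapDomain, Finsupp.mapDomain_single]

theorem V_iso_X
    (𝒜 : G → Submodule ℂ A) (h𝒜 : IsStarGrading 𝒜) :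
    -- `Ψ` is the stated map on generators, and is a linear bijection
    (∀ (w v r : G) (a : A), a ∈ 𝒜 w →
      PsiV (Finsupp.single (w, v, r) a) = Finsupp.single (w, v * r⁻¹, r) a) ∧
    Function.Bijective (PsiV (G := G) (A := A)) ∧
    (∀ f g : (G × G × G) →₀ A, PsiV (f + g) = PsiV f + PsiV g) ∧
    (∀ (c : ℂ) (f : (G × G × G) →₀ A), PsiV (c • f) = c • PsiV f) ∧
    -- `Ψ` intertwines the left actions through the isomorphism
    -- `([g, (a, w, v)], u) ↦ (a, w, v g⁻¹, u, u⁻¹ g N)`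
    (∀ (g : G) (a : A) (w v u : G) (c : A) (w' v' r : G),
      a ∈ 𝒜 w → c ∈ 𝒜 w' →
      PsiV (vAct (N := N) g a w v u c w' v' r) =
        c4ActX a w (v * g⁻¹) u ((u⁻¹ * g : G) : G ⧸ N) c w' (v' * r⁻¹) r) ∧
    -- `Ψ` preserves the right `(A ⋊ G) ⋊ N`-valued inner products
    (∀ (a : A) (w v s : G) (c : A) (w' v' t : G),
      a ∈ 𝒜 w → c ∈ 𝒜 w' →
      vInner (N := N) a w v s c w' v' t =
        xInner a w (v * s⁻¹) s c w' (v' * t⁻¹) t) := by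
  refine ⟨?_, ?_, ?_, ?_, ?_, ?_⟩
  · intro w v r a _
    rw [psiV_single]; rfl
  · have : PsiV (G := G) (A := A) = ⇑(Finsupp.equivCongrLeft (M := A) (psiEquiv G)) := by
      funext f
      rw [psiV_eq_mapDomain, Finsupp.equivCongrLeft_apply,
        Finsupp.equivMapDomain_eq_mapDomain]
    rw [this]
    exact (Finsupp.equivCongrLeft (psiEquiv G)).bijective
  · intro f g
    simp only [psiV_eq_mapDomain, Finsupp.mapDomain_add]
  · intro c f
    simp only [psiV_eq_mapDomain, Finsupp.mapDomain_smul]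
  · intro g a w v u c w' v' r _ _
    have hcond : ((r⁻¹ * u⁻¹ * g ∈ N) ∧ v * (r⁻¹ * u⁻¹ * g)⁻¹ = w' * v') ↔
        (v * g⁻¹ = w' * (v' * r⁻¹) * u⁻¹ ∧
          ((u⁻¹ * g : G) : G ⧸ N) = ((r : G) : G ⧸ N)) := by
      rw [QuotientGroup.eq]
      constructor
      · rintro ⟨h1, h2⟩
        refine ⟨?_, ?_⟩
        · rw [show v * g⁻¹ = v * (r⁻¹ * u⁻¹ * g)⁻¹ * r⁻¹ * u⁻¹ by group, h2]; group
        · have := N.inv_mem h1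
          rwa [show (r⁻¹ * u⁻¹ * g)⁻¹ = (u⁻¹ * g)⁻¹ * r by group] at this
      · rintro ⟨h1, h2⟩
        refine ⟨?_, ?_⟩
        · have := N.inv_mem h2
          rwa [show ((u⁻¹ * g)⁻¹ * r)⁻¹ = r⁻¹ * u⁻¹ * g by group] at this
        · rw [show v * (r⁻¹ * u⁻¹ * g)⁻¹ = v * g⁻¹ * u * r by group, h1]; group
    unfold vAct c4ActX
    split_ifs with h1 h2 h2
    · rw [psiV_single]
      congr 1
      show (w * w', v' * (u * r)⁻¹, u * r) = _
      rw [Prod.ext_iff, Prod.ext_iff]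
      refine ⟨rfl, ?_, rfl⟩
      group
    · exact absurd (hcond.mp h1) h2
    · exact absurd (hcond.mpr h2) h1
    · simp [PsiV]
  · intro a w v s c w' v' t _ _
    have hcond : ((s⁻¹ * t ∈ N) ∧ w * v = w' * (v' * t⁻¹ * s)) ↔
        (w * (v * s⁻¹) = w' * (v' * t⁻¹) ∧ ((s : G) : G ⧸ N) = ((t : G) : G ⧸ N)) := by
      rw [QuotientGroup.eq]
      constructor
      · rintro ⟨h1, h2⟩
        exact ⟨by rw [show w * (v * s⁻¹) = w * v * s⁻¹ by group, h2]; group, h1⟩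
      · rintro ⟨h1, h2⟩
        exact ⟨h2, by rw [show w * v = w * (v * s⁻¹) * s by group, h1]; group⟩
    unfold vInner xInner
    split_ifs with h1 h2 h2
    · congr 1
    · exact absurd (hcond.mp h1) h2
    · exact absurd (hcond.mpr h2) h1
    · rfl

end
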